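/- arXiv:1606.01686 — 2 statements merged into one kernel-verified Lean document; each statement's English description precedes it below -/
import Mathlib

section
/- Let μ be a locally finite Borel measure on ℝ² (finite on bounded sets), let y > 0 and c ≥ 0, and suppose that (1/(πs²)) ∫_{B_s} μ(B(t,y)) dt → πy² · c as s → ∞ (integral with respect to Lebesgue measure). Then μ(B_r)/(πr²) → c as r → ∞. -/
/-!
By Fubini, `∫_{B(x,s)} μ(B(t,y)) dt = ∫ |B(x',y) ∩ B(x,s)| dμ(x')`, and the integrand equals
`|B(0,y)|` on `B(x,s-y)` and vanishes off `B(x,s+y)`. This gives the sandwich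
`∫_{B_{r-y}} μ(B(t,y)) dt ≤ πy² μ(B_r) ≤ ∫_{B_{r+y}} μ(B(t,y)) dt`, and since `(r ± y)²/r² → 1`
both bounds, divided by `πy² · πr²`, tend to `c`.
-/

open MeasureTheory Metric Real Filter
open scoped Topology

section BallAverage

variable {E : Type*} [NormedAddCommGroup E] [MeasurableSpace E] [BorelSpace E]
  [SecondCountableTopology E]

theorem setLIntegral_measure_closedBall (μ ν : Measure E) [SFinite μ] [SFinite ν]
    (S : Set E) (y : ℝ) :
    ∫⁻ t in S, μ (closedBall t y) ∂ν = ∫⁻ x, ν (closedBall x y ∩ S) ∂μ := by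
  have hA : MeasurableSet {p : E × E | dist p.2 p.1 ≤ y} :=
    measurableSet_le (continuous_snd.dist continuous_fst).measurable measurable_const
  refine (Measure.prod_apply hA).symm.trans ?_
  rw [Measure.prod_apply_symm hA]
  refine lintegral_congr fun x => ?_
  have hslice : (fun t => (t, x)) ⁻¹' {p : E × E | dist p.2 p.1 ≤ y} = closedBall x y := by
    ext t
    simp [dist_comm]
  rw [hslice, Measure.restrict_apply measurableSet_closedBall]

variable (μ ν : Measure E) [SFinite μ] [SFinite ν] [ν.IsAddHaarMeasure]

theorem measure_closedBall_mul_le_setLIntegral (x : E) (r y : ℝ) :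
    ν (closedBall 0 y) * μ (closedBall x r) ≤
      ∫⁻ t in closedBall x (r + y), μ (closedBall t y) ∂ν := by
  rw [setLIntegral_measure_closedBall, ← lintegral_indicator_const measurableSet_closedBall]
  refine lintegral_mono fun x' => ?_
  by_cases hx' : x' ∈ closedBall x r
  · rw [Set.indicator_of_mem hx', ← Measure.addHaar_closedBall_center ν x',
      Set.inter_eq_left.mpr (closedBall_subset_closedBall' _)]
    rw [mem_closedBall] at hx'
    linarith
  · rw [Set.indicator_of_notMem hx']
    exact zero_le

theorem setLIntegral_le_measure_closedBall_mul (x : E) (r y : ℝ) :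
    ∫⁻ t in closedBall x (r - y), μ (closedBall t y) ∂ν ≤
      ν (closedBall 0 y) * μ (closedBall x r) := by
  rw [setLIntegral_measure_closedBall, ← lintegral_indicator_const measurableSet_closedBall]
  refine lintegral_mono fun x' => ?_
  by_cases hx' : x' ∈ closedBall x r
  · rw [Set.indicator_of_mem hx', ← Measure.addHaar_closedBall_center ν x']
    exact measure_mono Set.inter_subset_left
  · have hdisj : Disjoint (closedBall x' y) (closedBall x (r - y)) := by
      apply closedBall_disjoint_closedBall
      rw [mem_closedBall, not_le] at hx'
      linarith
    rw [hdisj.inter_eq, measure_empty]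
    exact zero_le

end BallAverage

theorem tendsto_add_div_self_sq (d : ℝ) : Tendsto (fun r : ℝ => ((r + d) / r) ^ 2) atTop (𝓝 1) := by
  have h : Tendsto (fun r : ℝ => (1 + d / r) ^ 2) atTop (𝓝 ((1 + 0) ^ 2)) :=
    (tendsto_const_nhds.add (tendsto_const_nhds.div_atTop tendsto_id)).pow 2
  rw [add_zero, one_pow] at h
  refine h.congr' ?_
  filter_upwards [eventually_ne_atTop 0] with r hr
  rw [add_div, div_self hr]

theorem tendsto_shift_div_sq {I : ℝ → ℝ} {a l : ℝ} (d : ℝ)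
    (h : Tendsto (fun s => 1 / (a * s ^ 2) * I s) atTop (𝓝 l)) :
    Tendsto (fun r => I (r + d) / (a * r ^ 2)) atTop (𝓝 l) := by
  have hprod := (h.comp (tendsto_atTop_add_const_right atTop d tendsto_id)).mul
    (tendsto_add_div_self_sq d)
  rw [mul_one] at hprod
  refine hprod.congr' ?_
  filter_upwards [eventually_ne_atTop 0, eventually_ne_atTop (-d)] with r hr hrd
  have hrd' : r + d ≠ 0 := fun h => hrd (by linarith)
  simp only [Function.comp_apply, id, div_pow]
  field_simp

theorem tendsto_div_sq_of_shift_sandwich {m I : ℝ → ℝ} {a V L d : ℝ} (ha : 0 < a) (hV : 0 < V)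
    (hI : Tendsto (fun s => 1 / (a * s ^ 2) * I s) atTop (𝓝 (V * L)))
    (hlo : ∀ r, I (r - d) ≤ V * m r) (hhi : ∀ r, V * m r ≤ I (r + d)) :
    Tendsto (fun r => m r / (a * r ^ 2)) atTop (𝓝 L) := by
  have hbound : ∀ z, Tendsto (fun r => I (r + z) / (a * r ^ 2) / V) atTop (𝓝 L) := fun z => by
    simpa [hV.ne'] using (tendsto_shift_div_sq z hI).div_const V
  have hm : ∀ r, m r / (a * r ^ 2) = V * m r / (a * r ^ 2) / V := fun r => by
    field_simp
  refine tendsto_of_tendsto_of_tendsto_of_le_of_le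
    (by simpa [sub_eq_add_neg] using hbound (-d)) (hbound d) (fun r => ?_) (fun r => ?_)
  · rw [hm r]
    gcongr
    exact hlo r
  · rw [hm r]
    gcongr
    exact hhi r

theorem density_limit_general (μ : Measure (EuclideanSpace ℝ (Fin 2)))
    (hμ : ∀ s : Set (EuclideanSpace ℝ (Fin 2)), Bornology.IsBounded s → μ s < ⊤)
    (y c : ℝ) (hy : 0 < y)
    (hlim : Tendsto
      (fun s : ℝ => (1 / (π * s ^ 2)) *
        (∫⁻ t in closedBall (0 : EuclideanSpace ℝ (Fin 2)) s, μ (closedBall t y)).toReal)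
      atTop (nhds (π * y ^ 2 * c))) :
    Tendsto (fun r : ℝ => (μ (closedBall (0 : EuclideanSpace ℝ (Fin 2)) r)).toReal / (π * r ^ 2))
      atTop (nhds c) := by
  have : IsLocallyFiniteMeasure μ :=
    ⟨fun x => ⟨ball x 1, ball_mem_nhds x one_pos, hμ _ isBounded_ball⟩⟩
  have hball_fin : ∀ r,
      volume (closedBall (0 : EuclideanSpace ℝ (Fin 2)) y) * μ (closedBall 0 r) ≠ ⊤ := fun r =>
    ENNReal.mul_ne_top measure_closedBall_lt_top.ne (hμ _ isBounded_closedBall).ne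
  have hV : (volume (closedBall (0 : EuclideanSpace ℝ (Fin 2)) y)).toReal = π * y ^ 2 := by
    simp [hy.le, pi_pos.le, mul_comm]
  refine tendsto_div_sq_of_shift_sandwich (d := y) pi_pos (by positivity) hlim
    (fun r => ?_) (fun r => ?_)
  · rw [← hV, ← ENNReal.toReal_mul]
    exact ENNReal.toReal_mono (hball_fin r) (setLIntegral_le_measure_closedBall_mul μ volume 0 r y)
  · have hint_fin := (setLIntegral_le_measure_closedBall_mul μ volume 0 (r + y + y) y).trans_lt
      (hball_fin _).lt_top
    rw [add_sub_cancel_right] at hint_fin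
    rw [← hV, ← ENNReal.toReal_mul]
    exact ENNReal.toReal_mono hint_fin.ne (measure_closedBall_mul_le_setLIntegral μ volume 0 r y)

/-- The deterministic content of equations (5)–(10) of the paper: if the
window-averaged integrals `(1/(πs²)) ∫_{B_s} μ(B(t,y)) dt` converge to `πy²·c`
as `s → ∞`, then `μ(B_r)/(πr²) → c` as `r → ∞`. -/
theorem density_limit (μ : Measure (EuclideanSpace ℝ (Fin 2)))
    (hμ : ∀ s : Set (EuclideanSpace ℝ (Fin 2)), Bornology.IsBounded s → μ s < ⊤)
    (y c : ℝ) (hy : 0 < y) (hc : 0 ≤ c)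
    (hlim : Tendsto
      (fun s : ℝ => (1 / (π * s ^ 2)) *
        (∫⁻ t in closedBall (0 : EuclideanSpace ℝ (Fin 2)) s, μ (closedBall t y)).toReal)
      atTop (nhds (π * y ^ 2 * c))) :
    Tendsto (fun r : ℝ => (μ (closedBall (0 : EuclideanSpace ℝ (Fin 2)) r)).toReal / (π * r ^ 2))
      atTop (nhds c) :=
  density_limit_general μ hμ y c hy hlim
end

section
/- Let 𝒮 be a countable collection of closed line segments in ℝ² such that every bounded subset of ℝ² contains only finitely many segment endpoints and carries finite total segment length; for a set D ⊆ ℝ² let ℓ(D) = Σ_{s ∈ 𝒮} ℋ¹(s ∩ D) be the total length of the segments within D, where ℋ¹ is one-dimensional Hausdorff measure. Then for all r > 0 and y > 0, the number of segments of 𝒮 that intersect the closed disc B_r but are not contained in B_r is at most (ℓ(B_{r+y}) − ℓ(B_r))/y + (the number of segment endpoints lying in B_{r+y} ∖ B_r). -/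
/-!
A segment that meets `B_r` without lying in it has an endpoint outside `B_r`. If neither endpoint
lies in the annulus `B_{r+y} ∖ B_r`, that endpoint lies outside `B_{r+y}`, and the segment, being
connected, crosses the whole annulus; projecting by the distance to the centre, a `1`-Lipschitz
map, shows that it has length at least `y` there. By Markov's inequality at most
`ℓ(B_{r+y} ∖ B_r) / y` segments do so.
-/

open MeasureTheory Metric
open scoped ENNReal

theorem ofReal_le_hausdorffMeasure_inter_annulus {E : Type*} [MetricSpace E] [MeasurableSpace E]
    [BorelSpace E] {S : Set E} (hS : IsPreconnected S) {c q p : E} {r y : ℝ} (hq : q ∈ S)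
    (hp : p ∈ S) (hqr : dist q c ≤ r) (hpr : r + y ≤ dist p c) :
    ENNReal.ofReal y ≤ μH[1] (S ∩ (closedBall c (r + y) \ closedBall c r)) := by
  set A := closedBall c (r + y) \ closedBall c r
  have hIoc : Set.Ioc r (r + y) ⊆ (fun x => dist x c) '' (S ∩ A) := by
    intro t ht
    obtain ⟨x, hxS, rfl⟩ := hS.intermediate_value hq hp
      (LipschitzWith.dist_left c).continuous.continuousOn ⟨hqr.trans ht.1.le, ht.2.trans hpr⟩
    exact ⟨x, ⟨hxS, mem_closedBall.2 ht.2, fun hx => (mem_closedBall.1 hx).not_gt ht.1⟩, rfl⟩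
  calc ENNReal.ofReal y = μH[1] (Set.Ioc r (r + y)) := by
        rw [hausdorffMeasure_real, Real.volume_Ioc, add_sub_cancel_left]
    _ ≤ μH[1] ((fun x => dist x c) '' (S ∩ A)) := measure_mono hIoc
    _ ≤ μH[1] (S ∩ A) := by
        simpa using (LipschitzWith.dist_left c).hausdorffMeasure_image_le zero_le_one (S ∩ A)

theorem mem_annulus_or_ofReal_le_hausdorffMeasure_segment_inter_annulus {E : Type*}
    [NormedAddCommGroup E] [NormedSpace ℝ E] [MeasurableSpace E] [BorelSpace E] {a b c : E}
    {r y : ℝ} (hmeet : (segment ℝ a b ∩ closedBall c r).Nonempty)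
    (hout : ¬ segment ℝ a b ⊆ closedBall c r) :
    a ∈ closedBall c (r + y) \ closedBall c r ∨ b ∈ closedBall c (r + y) \ closedBall c r ∨
      ENNReal.ofReal y ≤ μH[1] (segment ℝ a b ∩ (closedBall c (r + y) \ closedBall c r)) := by
  obtain ⟨q, hq, hqr⟩ := hmeet
  have hab : a ∉ closedBall c r ∨ b ∉ closedBall c r := by
    by_contra! h
    exact hout ((convex_closedBall c r).segment_subset h.1 h.2)
  have hcross {p : E} (hp : p ∈ segment ℝ a b) (hpr : p ∉ closedBall c r) :
      p ∈ closedBall c (r + y) \ closedBall c r ∨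
        ENNReal.ofReal y ≤ μH[1] (segment ℝ a b ∩ (closedBall c (r + y) \ closedBall c r)) := by
    by_cases hpy : p ∈ closedBall c (r + y)
    · exact Or.inl ⟨hpy, hpr⟩
    · exact Or.inr <| ofReal_le_hausdorffMeasure_inter_annulus (convex_segment a b).isPreconnected
        hq hp (mem_closedBall.1 hqr) (not_le.1 hpy).le
  rcases hab with ha | hb
  · rcases hcross (left_mem_segment ℝ a b) ha with h | h <;> tauto
  · rcases hcross (right_mem_segment ℝ a b) hb with h | h <;> tauto

section TotalLength

variable {E ι : Type*} [EMetricSpace E] [MeasurableSpace E] [BorelSpace E]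

noncomputable def totalLength (S : ι → Set E) : Measure E :=
  Measure.sum fun i => μH[1].restrict (S i)

theorem totalLength_apply (S : ι → Set E) {D : Set E} (hD : MeasurableSet D) :
    totalLength S D = ∑' i, μH[1] (S i ∩ D) := by
  simp only [totalLength, Measure.sum_apply _ hD, Measure.restrict_apply hD, Set.inter_comm]

theorem toReal_tsum_hausdorffMeasure_inter_sdiff (S : ι → Set E) {s t : Set E} (hst : s ⊆ t)
    (hs : MeasurableSet s) (ht : MeasurableSet t) (hfin : ∑' i, μH[1] (S i ∩ t) ≠ ∞) :
    (∑' i, μH[1] (S i ∩ t)).toReal - (∑' i, μH[1] (S i ∩ s)).toReal =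
      (∑' i, μH[1] (S i ∩ (t \ s))).toReal := by
  rw [← totalLength_apply S ht] at hfin
  rw [← totalLength_apply S hs, ← totalLength_apply S ht, ← totalLength_apply S (ht.diff hs)]
  exact (measureReal_sdiff hst hs hfin).symm

end TotalLength

theorem ncard_le_tsum_toReal_div {ι : Type*} {f : ι → ℝ≥0∞} (hf : ∑' i, f i ≠ ∞) {y : ℝ}
    (hy : 0 < y) : ({i | ENNReal.ofReal y ≤ f i}.ncard : ℝ) ≤ (∑' i, f i).toReal / y := by
  set s := {i | ENNReal.ofReal y ≤ f i}
  have hmarkov : (s.ncard : ℝ≥0∞) * ENNReal.ofReal y ≤ ∑' i, f i :=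
    calc (s.ncard : ℝ≥0∞) * ENNReal.ofReal y ≤ s.encard * ENNReal.ofReal y := by
          gcongr; exact_mod_cast s.ncard_le_encard
      _ = ∑' _ : s, ENNReal.ofReal y := (ENNReal.tsum_set_const s _).symm
      _ ≤ ∑' i : s, f i := ENNReal.tsum_le_tsum fun i => i.2
      _ ≤ ∑' i, f i := ENNReal.tsum_comp_le_tsum_of_injective Subtype.val_injective f
  rw [le_div_iff₀ hy]
  simpa [ENNReal.toReal_mul, hy.le] using ENNReal.toReal_mono hf hmarkov

theorem ncard_le_add_add_of_subset_union {ι : Type*} {S T₁ T₂ T₃ : Set ι}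
    (h : S ⊆ T₁ ∪ T₂ ∪ T₃) (h₁ : T₁.Finite) (h₂ : T₂.Finite) (h₃ : T₃.Finite) :
    S.ncard ≤ T₁.ncard + T₂.ncard + T₃.ncard :=
  calc S.ncard ≤ (T₁ ∪ T₂ ∪ T₃).ncard := Set.ncard_le_ncard h ((h₁.union h₂).union h₃)
    _ ≤ (T₁ ∪ T₂).ncard + T₃.ncard := Set.ncard_union_le _ _
    _ ≤ T₁.ncard + T₂.ncard + T₃.ncard := by grw [Set.ncard_union_le T₁ T₂]

theorem truncated_segment_bound_general {ι : Type*} [Countable ι]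
    (a b : ι → EuclideanSpace ℝ (Fin 2))
    (hfin : ∀ D : Set (EuclideanSpace ℝ (Fin 2)), Bornology.IsBounded D →
      {i | a i ∈ D ∨ b i ∈ D}.Finite)
    (hlen : ∀ D : Set (EuclideanSpace ℝ (Fin 2)), Bornology.IsBounded D →
      (∑' i, μH[1] (segment ℝ (a i) (b i) ∩ D)) < ⊤)
    (r y : ℝ) (hy : 0 < y) :
    (Set.ncard {i | (segment ℝ (a i) (b i) ∩ closedBall 0 r).Nonempty ∧
        ¬ segment ℝ (a i) (b i) ⊆ closedBall 0 r} : ℝ) ≤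
      ((∑' i, μH[1] (segment ℝ (a i) (b i) ∩ closedBall 0 (r + y))).toReal -
          (∑' i, μH[1] (segment ℝ (a i) (b i) ∩ closedBall 0 r)).toReal) / y +
        ((Set.ncard {i | a i ∈ closedBall 0 (r + y) \ closedBall 0 r} : ℝ) +
          (Set.ncard {i | b i ∈ closedBall 0 (r + y) \ closedBall 0 r} : ℝ)) := by
  set A : Set (EuclideanSpace ℝ (Fin 2)) := closedBall 0 (r + y) \ closedBall 0 r
  have hA : Bornology.IsBounded A := isBounded_closedBall.subset Set.sdiff_subset
  have hℓA : ∑' i, μH[1] (segment ℝ (a i) (b i) ∩ A) ≠ ∞ := (hlen A hA).ne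
  have hcover : {i | (segment ℝ (a i) (b i) ∩ closedBall 0 r).Nonempty ∧
      ¬ segment ℝ (a i) (b i) ⊆ closedBall 0 r} ⊆
      {i | a i ∈ A} ∪ {i | b i ∈ A} ∪ {i | ENNReal.ofReal y ≤ μH[1] (segment ℝ (a i) (b i) ∩ A)} :=
    fun i hi => by
      simpa only [Set.mem_union, Set.mem_ofPred_eq, or_assoc] using
        mem_annulus_or_ofReal_le_hausdorffMeasure_segment_inter_annulus hi.1 hi.2
  have hcount := ncard_le_add_add_of_subset_union hcover
    ((hfin A hA).subset fun i => Or.inl) ((hfin A hA).subset fun i => Or.inr)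
    (ENNReal.finite_const_le_of_tsum_ne_top hℓA (ENNReal.ofReal_pos.2 hy).ne')
  replace hcount := (Nat.cast_le (α := ℝ)).2 hcount
  push_cast at hcount
  rw [toReal_tsum_hausdorffMeasure_inter_sdiff _ (closedBall_subset_closedBall (by linarith))
    measurableSet_closedBall measurableSet_closedBall (hlen _ isBounded_closedBall).ne]
  linarith [ncard_le_tsum_toReal_div hℓA hy]

/-- The truncated-segment bound of Section 9 of the paper: for a line-segment
process with locally finitely many endpoints and locally finite length, the
number of segments meeting the disc `B_r` but not contained in it is at most
`(ℓ(B_{r+y}) − ℓ(B_r))/y` plus the number of segment endpoints in the annulus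
`B_{r+y} ∖ B_r`. -/
theorem truncated_segment_bound {ι : Type*} [Countable ι]
    (a b : ι → EuclideanSpace ℝ (Fin 2))
    (hfin : ∀ D : Set (EuclideanSpace ℝ (Fin 2)), Bornology.IsBounded D →
      {i | a i ∈ D ∨ b i ∈ D}.Finite)
    (hlen : ∀ D : Set (EuclideanSpace ℝ (Fin 2)), Bornology.IsBounded D →
      (∑' i, μH[1] (segment ℝ (a i) (b i) ∩ D)) < ⊤)
    (r y : ℝ) (hr : 0 < r) (hy : 0 < y) :
    (Set.ncard {i | (segment ℝ (a i) (b i) ∩ closedBall 0 r).Nonempty ∧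
        ¬ segment ℝ (a i) (b i) ⊆ closedBall 0 r} : ℝ) ≤
      ((∑' i, μH[1] (segment ℝ (a i) (b i) ∩ closedBall 0 (r + y))).toReal -
          (∑' i, μH[1] (segment ℝ (a i) (b i) ∩ closedBall 0 r)).toReal) / y +
        ((Set.ncard {i | a i ∈ closedBall 0 (r + y) \ closedBall 0 r} : ℝ) +
          (Set.ncard {i | b i ∈ closedBall 0 (r + y) \ closedBall 0 r} : ℝ)) :=
  truncated_segment_bound_general a b hfin hlen r y hy
end
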